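/- Let (X, 𝒜) be a measurable space. A subset M of M(X) is a fixed maximal ideal of M(X) with ⋃_{f ∈ M} coz(f) measurable if and only if there exists a prime element P of the lattice 𝒜 of measurable sets such that M = M_P = {f ∈ M(X) : coz(f) ⊆ P}. -/
import Mathlib


open Set

/-- The ring of all real-valued measurable functions on a measurable space `X`,
as a subring of the pointwise ring `X → ℝ`. -/
def Mring (X : Type*) [MeasurableSpace X] : Subring (X → ℝ) where
  carrier := {f | Measurable f}
  mul_mem' hf hg := hf.mul hg
  one_mem' := measurable_one
  add_mem' hf hg := hf.add hg
  zero_mem' := measurable_zero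
  neg_mem' hf := hf.neg

/-- The zero-set of a measurable function. -/
def zset {X : Type*} [MeasurableSpace X] (f : Mring X) : Set X :=
  {x | (f : X → ℝ) x = 0}

/-- The cozero-set of a measurable function. -/
def coz {X : Type*} [MeasurableSpace X] (f : Mring X) : Set X :=
  {x | (f : X → ℝ) x ≠ 0}

/-- A prime element of the lattice `𝒜` of measurable sets: a measurable set
`P ≠ X` such that `V ∩ W ⊆ P` implies `V ⊆ P` or `W ⊆ P` for measurable `V, W`. -/
def IsPrimeElem {X : Type*} [MeasurableSpace X] (P : Set X) : Prop :=
  MeasurableSet P ∧ P ≠ Set.univ ∧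
    ∀ V W : Set X, MeasurableSet V → MeasurableSet W → V ∩ W ⊆ P → V ⊆ P ∨ W ⊆ P


section Helpers

variable {X : Type*} [MeasurableSpace X]

lemma measurableSet_coz (f : Mring X) : MeasurableSet (coz f) := by
  have : coz f = ((f : X → ℝ) ⁻¹' {0})ᶜ := by ext x; simp [coz]
  rw [this]
  exact (f.2 (measurableSet_singleton 0)).compl

lemma measurableSet_zset (f : Mring X) : MeasurableSet (zset f) :=
  f.2 (measurableSet_singleton 0)

/-- indicator function as an element of `Mring X` -/
noncomputable def ind (S : Set X) (hS : MeasurableSet S) : Mring X :=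
  ⟨S.indicator 1, measurable_one.indicator hS⟩

lemma coz_ind (S : Set X) (hS : MeasurableSet S) : coz (ind S hS) = S := by
  ext x
  simp [coz, ind, Set.indicator_apply]

/-- The ideal `M_P` of functions whose cozero set is inside `P`. -/
def Mideal (P : Set X) : Ideal (Mring X) where
  carrier := {f | coz f ⊆ P}
  add_mem' := by
    intro a b ha hb x hx
    simp only [coz, Set.mem_setOf_eq] at hx
    have : (a : X → ℝ) x ≠ 0 ∨ (b : X → ℝ) x ≠ 0 := by
      by_contra h
      push_neg at h
      apply hx
      simp [h.1, h.2]
    rcases this with h | h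
    · exact ha h
    · exact hb h
  zero_mem' := by intro x hx; simp [coz] at hx
  smul_mem' := by
    intro c f hf x hx
    apply hf
    simp only [coz, Set.mem_setOf_eq] at hx ⊢
    intro h
    apply hx
    simp [h]

lemma mem_Mideal {P : Set X} {f : Mring X} : f ∈ Mideal P ↔ coz f ⊆ P := Iff.rfl

lemma coz_mul (a b : Mring X) : coz (a * b) = coz a ∩ coz b := by
  ext x; simp [coz, mul_ne_zero_iff]

end Helpers

/-- A subset `M` of `M(X)` is a fixed maximal ideal with `⋃_{f ∈ M} coz(f)`
measurable iff there is a prime element `P` of `𝒜` with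
`M = M_P = {f ∈ M(X) : coz(f) ⊆ P}`. -/

theorem stmt_12 {X : Type*} [MeasurableSpace X] (M : Set (Mring X)) :
    (∃ I : Ideal (Mring X), I.IsMaximal ∧ (I : Set (Mring X)) = M ∧
        (⋂ f ∈ I, zset f).Nonempty ∧ MeasurableSet (⋃ f ∈ M, coz f)) ↔
      ∃ P : Set X, IsPrimeElem P ∧ M = {f : Mring X | coz f ⊆ P} := by
  constructor
  · rintro ⟨I, hmax, hIM, ⟨x₀, hx₀⟩, hmeas⟩
    set P : Set X := ⋃ f ∈ M, coz f with hP
    simp only [Set.mem_iInter] at hx₀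
    have hx₀P : x₀ ∉ P := by
      intro hx
      simp only [hP, Set.mem_iUnion] at hx
      obtain ⟨f, hfM, hfx⟩ := hx
      have : f ∈ I := by rw [← hIM] at hfM; exact hfM
      exact hfx (hx₀ f this)
    have hPuniv : P ≠ Set.univ := fun h => hx₀P (h ▸ Set.mem_univ x₀)
    -- I = Mideal P
    have hle : I ≤ Mideal P := by
      intro f hf
      rw [mem_Mideal]
      intro x hx
      simp only [hP, Set.mem_iUnion]
      exact ⟨f, hIM ▸ hf, hx⟩
    have hne : Mideal P ≠ ⊤ := by
      intro h
      have h1 : (1 : Mring X) ∈ Mideal P := h ▸ Submodule.mem_top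
      rw [mem_Mideal] at h1
      exact hx₀P (h1 (by simp [coz]))
    have hIeq : I = Mideal P := hmax.eq_of_le hne hle
    have hMeq : M = {f : Mring X | coz f ⊆ P} := by
      rw [← hIM, hIeq]; rfl
    refine ⟨P, ⟨hmeas, hPuniv, ?_⟩, hMeq⟩
    intro V W hV hW hVW
    have hfg : ind V hV * ind W hW ∈ Mideal P := by
      rw [mem_Mideal, coz_mul, coz_ind, coz_ind]
      exact hVW
    have := (hmax.isPrime).mem_or_mem (show ind V hV * ind W hW ∈ I by rw [hIeq]; exact hfg)
    rcases this with h | h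
    · left; rw [← coz_ind V hV]; exact hle h
    · right; rw [← coz_ind W hW]; exact hle h
  · rintro ⟨P, ⟨hPmeas, hPuniv, hPprime⟩, hMeq⟩
    obtain ⟨x₀, hx₀⟩ : Pᶜ.Nonempty := by
      rw [Set.nonempty_compl]; exact hPuniv
    refine ⟨Mideal P, ?_, by rw [hMeq]; rfl, ?_, ?_⟩
    · rw [Ideal.isMaximal_iff]
      constructor
      · rw [mem_Mideal]
        intro h
        exact hx₀ (h (by simp [coz]))
      · intro J g hIJ hgI hgJ
        have hcoz : ¬ coz g ⊆ P := hgI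
        have hzset : zset g ⊆ P := by
          rcases hPprime (coz g) (zset g) (measurableSet_coz g) (measurableSet_zset g)
            (by intro x ⟨hx1, hx2⟩; exact absurd hx2 hx1) with h | h
          · exact absurd h hcoz
          · exact h
        set h1 : Mring X := ind (zset g) (measurableSet_zset g) with hh1
        have hh1J : h1 ∈ J := hIJ (by rw [mem_Mideal, hh1, coz_ind]; exact hzset)
        set k : Mring X := ⟨fun x => ((g : X → ℝ) x)⁻¹, g.2.inv⟩ with hk
        have hkg : k * g + h1 = 1 := by
          apply Subtype.ext
          funext x
          by_cases hx : (g : X → ℝ) x = 0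
          · have : x ∈ zset g := hx
            simp [hk, hh1, ind, hx, Set.indicator_apply, this]
          · have : x ∉ zset g := hx
            simp [hk, hh1, ind, Set.indicator_apply, this, inv_mul_cancel₀ hx]
        rw [← hkg]
        exact J.add_mem (J.mul_mem_left k hgJ) hh1J
    · refine ⟨x₀, ?_⟩
      simp only [Set.mem_iInter]
      intro f hf
      rw [mem_Mideal] at hf
      by_contra hfx
      exact hx₀ (hf hfx)
    · have : (⋃ f ∈ M, coz f) = P := by
        apply Set.Subset.antisymm
        · simp only [Set.iUnion_subset_iff]
          intro f hf
          rw [hMeq] at hf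
          exact hf
        · intro x hx
          simp only [Set.mem_iUnion]
          refine ⟨ind P hPmeas, ?_, by rw [coz_ind]; exact hx⟩
          rw [hMeq]
          simp only [Set.mem_setOf_eq, coz_ind]
          exact Set.Subset.rfl
      rw [this]
      exact hPmeas
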